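/- arXiv:2508.19167 — 2 statements merged into one kernel-verified Lean document; each statement's English description precedes it below -/
import Mathlib

section
/- For every z ∈ ℂ \ Λ, the family of terms 1/(z−ω)² − 1/ω², indexed by ω ∈ Λ \ {0}, is summable, so the series defining the Weierstrass elliptic function ℘(z) = 1/z² + Σ_{ω ∈ Λ \ {0}} (1/(z−ω)² − 1/ω²) converges absolutely. -/
/-- The period lattice Λ = {2mω₁ + 2nω₃ : m, n ∈ ℤ}. -/
def periodLattice (ω₁ ω₃ : ℂ) : Set ℂ :=
  {z : ℂ | ∃ m n : ℤ, z = 2 * (m : ℂ) * ω₁ + 2 * (n : ℂ) * ω₃}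

/-! Since `ω₃ / ω₁` is not real, `2ω₁, 2ω₃` is an `ℝ`-basis of `ℂ`, so `Λ` is the lattice of a
Mathlib `PeriodPair`, over which `PeriodPair.hasSum_weierstrassP` sums the terms of `℘(z)`
(the term at `ω = 0` being the junk value `1 / z ^ 2 - 1 / 0 = 1 / z ^ 2`); summability passes
to the subfamily indexed by `Λ \ {0}`. -/

lemma Complex.linearIndependent_pair_of_div_notMem_range_ofReal {a b : ℂ}
    (h : b / a ∉ Set.range ((↑) : ℝ → ℂ)) : LinearIndependent ℝ ![a, b] := by
  have ha : a ≠ 0 := by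
    rintro rfl
    exact h ⟨0, by simp⟩
  refine (LinearIndependent.pair_iff' ha).mpr fun r hr => h ⟨r, ?_⟩
  rw [← hr, Complex.real_smul, mul_div_cancel_right₀ _ ha]

def halfPeriodsPeriodPair (ω₁ ω₃ : ℂ) (hτ : ω₃ / ω₁ ∉ Set.range ((↑) : ℝ → ℂ)) : PeriodPair where
  ω₁ := 2 * ω₁
  ω₂ := 2 * ω₃
  indep := Complex.linearIndependent_pair_of_div_notMem_range_ofReal <| by
    rwa [mul_div_mul_left _ _ two_ne_zero]

lemma mem_lattice_halfPeriodsPeriodPair_iff {ω₁ ω₃ : ℂ} (hτ : ω₃ / ω₁ ∉ Set.range ((↑) : ℝ → ℂ))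
    {w : ℂ} : w ∈ (halfPeriodsPeriodPair ω₁ ω₃ hτ).lattice ↔ w ∈ periodLattice ω₁ ω₃ := by
  simp only [PeriodPair.mem_lattice, halfPeriodsPeriodPair, periodLattice, Set.mem_ofPred_eq]
  refine exists₂_congr fun m n => ?_
  rw [eq_comm]
  ring_nf

lemma PeriodPair.summable_weierstrassP_summand_of_subset_lattice (L : PeriodPair) (z : ℂ)
    {s : Set ℂ} (hs : s ⊆ L.lattice) : Summable fun w : s => 1 / (z - w) ^ 2 - 1 / (w : ℂ) ^ 2 :=
  -- the ascription elaborates the term before unifying with the goal, which otherwise times out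
  ((L.hasSum_weierstrassP z).summable.comp_injective (Set.inclusion_injective hs) :)

theorem weierstrass_wp_series_summable_general
    (ω₁ ω₃ : ℂ)
    (hτ : ω₃ / ω₁ ∉ Set.range ((↑) : ℝ → ℂ)) :
    ∀ z : ℂ, z ∉ periodLattice ω₁ ω₃ →
      Summable (fun w : {w : ℂ // w ∈ periodLattice ω₁ ω₃ ∧ w ≠ 0} =>
        1 / (z - (w : ℂ)) ^ 2 - 1 / (w : ℂ) ^ 2) := by
  intro z _
  exact (halfPeriodsPeriodPair ω₁ ω₃ hτ).summable_weierstrassP_summand_of_subset_lattice z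
    fun w hw => (mem_lattice_halfPeriodsPeriodPair_iff hτ).mpr hw.1

/-- For every `z ∈ ℂ \ Λ`, the family `1/(z−ω)² − 1/ω²`, indexed by
`ω ∈ Λ \ {0}`, is summable, so the series defining `℘(z)` converges absolutely. -/
theorem weierstrass_wp_series_summable
    (ω₁ ω₃ : ℂ) (hω₁ : ω₁ ≠ 0) (hω₃ : ω₃ ≠ 0)
    (hτ : ω₃ / ω₁ ∉ Set.range ((↑) : ℝ → ℂ)) :
    ∀ z : ℂ, z ∉ periodLattice ω₁ ω₃ →
      Summable (fun w : {w : ℂ // w ∈ periodLattice ω₁ ω₃ ∧ w ≠ 0} =>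
        1 / (z - (w : ℂ)) ^ 2 - 1 / (w : ℂ) ^ 2) :=
  weierstrass_wp_series_summable_general ω₁ ω₃ hτ
end

section
/- The lemniscatic period constant equals Γ(1/4)²/(2√(2π)); precisely, 2·∫₀¹ dt/√(1 − t⁴) = Γ(1/4)²/(2√(2π)) ≈ 2.62205755429212, where Γ is the gamma function and the integral is the real integral of (1 − t⁴)^{-1/2} over [0, 1]. -/
/-!
Substituting `u = t ^ 4` turns the integral into `B(1/4, 1/2) / 4 = Γ(1/4) Γ(1/2) / (4 Γ(3/4))`.
Euler's reflection formula gives `Γ(1/4) Γ(3/4) = π / sin (π/4) = π √2`, and `Γ(1/2) = √π`.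
-/

open MeasureTheory Set Real

theorem intervalIntegral_rpow_mul_one_sub_rpow_eq_beta {a b : ℝ} (ha : 0 < a) (hb : 0 < b) :
    ∫ u in (0 : ℝ)..1, u ^ (a - 1) * (1 - u) ^ (b - 1) = ProbabilityTheory.beta a b := by
  have hcpow : ∀ u ∈ uIcc (0 : ℝ) 1, (u : ℂ) ^ ((a : ℂ) - 1) * (1 - (u : ℂ)) ^ ((b : ℂ) - 1) =
      ((u ^ (a - 1) * (1 - u) ^ (b - 1) : ℝ) : ℂ) := by
    intro u hu
    rw [uIcc_of_le zero_le_one] at hu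
    rw [Complex.ofReal_mul, Complex.ofReal_cpow hu.1, Complex.ofReal_cpow (sub_nonneg.2 hu.2)]
    push_cast
    rfl
  rw [ProbabilityTheory.beta_eq_betaIntegralReal a b ha hb, Complex.betaIntegral,
    intervalIntegral.integral_congr hcpow, intervalIntegral.integral_ofReal, Complex.ofReal_re]

theorem setIntegral_Ioo_zero_one_comp_rpow {E : Type*} [NormedAddCommGroup E] [NormedSpace ℝ E]
    {p : ℝ} (hp : 0 < p) (g : ℝ → E) :
    ∫ t in Ioo (0 : ℝ) 1, (p * t ^ (p - 1)) • g (t ^ p) = ∫ u in Ioo (0 : ℝ) 1, g u := by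
  have hmono : StrictMonoOn (· ^ p) (Icc (0 : ℝ) 1) := fun x hx y _ hxy =>
    rpow_lt_rpow hx.1 hxy hp
  have himage : (· ^ p) '' Ioo (0 : ℝ) 1 = Ioo 0 1 := by
    simpa [zero_rpow hp.ne'] using
      ((continuous_rpow_const hp.le).continuousOn (s := Icc (0 : ℝ) 1)).image_Ioo_of_strictMonoOn
        zero_le_one hmono
  conv_rhs => rw [← himage, integral_image_eq_integral_abs_deriv_smul measurableSet_Ioo
    (fun t ht => (hasDerivAt_rpow_const (Or.inl ht.1.ne')).hasDerivWithinAt)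
    (hmono.injOn.mono Ioo_subset_Icc_self)]
  refine setIntegral_congr_fun measurableSet_Ioo fun t ht => ?_
  rw [abs_of_pos (by have := ht.1; positivity)]

theorem setIntegral_one_sub_rpow_rpow_eq_beta {p s : ℝ} (hp : 0 < p) (hs : 0 < s) :
    ∫ t in Ioo (0 : ℝ) 1, (1 - t ^ p) ^ (s - 1) = ProbabilityTheory.beta p⁻¹ s / p := by
  have hjacobian : ∀ t ∈ Ioo (0 : ℝ) 1, (1 - t ^ p) ^ (s - 1) =
      (p * t ^ (p - 1)) • (p⁻¹ * ((t ^ p) ^ (p⁻¹ - 1) * (1 - t ^ p) ^ (s - 1))) := by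
    intro t ht
    have hpow : t ^ (p - 1) * (t ^ p) ^ (p⁻¹ - 1) = 1 := by
      rw [← rpow_mul ht.1.le, ← rpow_add ht.1, mul_sub, mul_inv_cancel₀ hp.ne', mul_one,
        sub_add_sub_cancel', sub_self, rpow_zero]
    rw [smul_eq_mul, mul_mul_mul_comm, mul_inv_cancel₀ hp.ne', one_mul, ← mul_assoc, hpow, one_mul]
  calc ∫ t in Ioo (0 : ℝ) 1, (1 - t ^ p) ^ (s - 1)
      = ∫ t in Ioo (0 : ℝ) 1,
          (p * t ^ (p - 1)) • (p⁻¹ * ((t ^ p) ^ (p⁻¹ - 1) * (1 - t ^ p) ^ (s - 1))) :=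
        setIntegral_congr_fun measurableSet_Ioo hjacobian
    _ = ∫ u in Ioo (0 : ℝ) 1, p⁻¹ * (u ^ (p⁻¹ - 1) * (1 - u) ^ (s - 1)) :=
        setIntegral_Ioo_zero_one_comp_rpow hp fun u => p⁻¹ * (u ^ (p⁻¹ - 1) * (1 - u) ^ (s - 1))
    _ = ProbabilityTheory.beta p⁻¹ s / p := by
      rw [integral_const_mul, ← integral_Ioc_eq_integral_Ioo,
        ← intervalIntegral.integral_of_le zero_le_one,
        intervalIntegral_rpow_mul_one_sub_rpow_eq_beta (inv_pos.2 hp) hs, inv_mul_eq_div]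

theorem Real.Gamma_one_quarter_mul_Gamma_three_quarters :
    Gamma (1 / 4) * Gamma (3 / 4) = π * √2 := by
  have hsin : sin (π * (1 / 4)) = √2 / 2 := by rw [← sin_pi_div_four]; ring_nf
  rw [show (3 / 4 : ℝ) = 1 - 1 / 4 by norm_num, Gamma_mul_Gamma_one_sub, hsin]
  field_simp
  exact (sq_sqrt zero_le_two).symm

theorem intervalIntegral_inv_sqrt_one_sub_pow_four :
    ∫ t in (0 : ℝ)..1, 1 / √(1 - t ^ 4) = ProbabilityTheory.beta (1 / 4) (1 / 2) / 4 := by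
  rw [intervalIntegral.integral_of_le zero_le_one, integral_Ioc_eq_integral_Ioo]
  convert setIntegral_one_sub_rpow_rpow_eq_beta (p := 4) (s := 1 / 2) four_pos one_half_pos
    using 1
  · refine setIntegral_congr_fun measurableSet_Ioo fun t ht => ?_
    have hbase : 0 ≤ 1 - t ^ 4 := sub_nonneg.2 (pow_le_one₀ ht.1.le ht.2.le)
    rw [rpow_ofNat, sqrt_eq_rpow, one_div, ← rpow_neg hbase]
    norm_num
  · norm_num

/-- The lemniscatic period constant: `2·∫₀¹ dt/√(1 − t⁴) = Γ(1/4)²/(2√(2π))`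
(≈ 2.62205755429212), where Γ is the gamma function. -/
theorem lemniscatic_period_constant :
    2 * ∫ t in (0 : ℝ)..1, 1 / Real.sqrt (1 - t ^ 4) =
      Real.Gamma (1 / 4) ^ 2 / (2 * Real.sqrt (2 * Real.pi)) := by
  have hΓ34 : Gamma (3 / 4) = π * √2 / Gamma (1 / 4) := by
    rw [eq_div_iff (Gamma_pos_of_pos (by norm_num)).ne', mul_comm,
      Gamma_one_quarter_mul_Gamma_three_quarters]
  have hsqrtπ : √π * √π = π := mul_self_sqrt pi_nonneg
  rw [intervalIntegral_inv_sqrt_one_sub_pow_four, ProbabilityTheory.beta,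
    show (1 / 4 + 1 / 2 : ℝ) = 3 / 4 by norm_num, hΓ34, Gamma_one_half_eq, sqrt_mul zero_le_two]
  have hΓ14 : 0 < Gamma (1 / 4) := Gamma_pos_of_pos (by norm_num)
  field_simp
  linear_combination 4 * hsqrtπ
end
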